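/- arXiv:2112.03510 — 2 statements merged into one kernel-verified Lean document; each statement's English description precedes it below -/
import Mathlib

section
/- Let λ > 0, r > 0 and a ∈ ℝ. Then the function h(u) = 2r ∫₀ᵘ λ·artanh(s/λ) ds + a·u attains a global minimum over the open interval (−λ, λ) at the unique point u* = λ·tanh(−a/(2λr)); that is, h(u*) ≤ h(u) for all u ∈ (−λ, λ), with equality only when u = u*. -/
/-!
The derivative of `h` is `2rλ·artanh(u/λ) + a`, which is strictly increasing on `(−λ, λ)` and
vanishes exactly at `u* = λ·tanh(−a/(2λr))`. By the mean value theorem, `h(u) − h(u*)` is the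
derivative at an intermediate point times `u − u*`, and both factors have the same sign.
-/

/-- Inverse hyperbolic tangent: the inverse of `tanh` on `(-1, 1)`. -/
noncomputable def artanh (x : ℝ) : ℝ := Real.log ((1 + x) / (1 - x)) / 2

open Set

lemma artanh_eq_real_artanh {x : ℝ} (hx : x ∈ Icc (-1) 1) : artanh x = Real.artanh x := by
  rw [Real.artanh_eq_half_log hx, artanh]
  ring

lemma strictMonoOn_artanh : StrictMonoOn artanh (Ioo (-1) 1) :=
  Real.strictMonoOn_artanh.congr fun _ hx => (artanh_eq_real_artanh (Ioo_subset_Icc_self hx)).symm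

lemma artanh_tanh (x : ℝ) : artanh (Real.tanh x) = x := by
  rw [artanh_eq_real_artanh ⟨(Real.neg_one_lt_tanh x).le, (Real.tanh_lt_one x).le⟩,
    Real.artanh_tanh]

lemma continuousOn_artanh : ContinuousOn artanh (Ioo (-1) 1) := fun x hx =>
  have hx₁ : 0 < 1 + x := by linarith [hx.1]
  have hx₂ : 0 < 1 - x := by linarith [hx.2]
  (((continuousAt_const.add continuousAt_id).div (continuousAt_const.sub continuousAt_id)
    hx₂.ne').log (div_pos hx₁ hx₂).ne' |>.div_const 2).continuousWithinAt

lemma div_mem_Ioo_neg_one_one {lam u : ℝ} (hlam : 0 < lam) (hu : u ∈ Ioo (-lam) lam) :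
    u / lam ∈ Ioo (-1) 1 := by
  rw [mem_Ioo, lt_div_iff₀ hlam, div_lt_one hlam, neg_one_mul]
  exact hu

lemma mul_tanh_mem_Ioo {lam : ℝ} (hlam : 0 < lam) (x : ℝ) :
    lam * Real.tanh x ∈ Ioo (-lam) lam := by
  constructor <;> nlinarith [Real.neg_one_lt_tanh x, Real.tanh_lt_one x]

theorem hasDerivAt_intervalIntegral_of_continuousOn {g : ℝ → ℝ} {S : Set ℝ} (hSo : IsOpen S)
    (hSc : S.OrdConnected) (hg : ContinuousOn g S) {a u : ℝ} (ha : a ∈ S) (hu : u ∈ S) :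
    HasDerivAt (fun x => ∫ s in a..x, g s) (g u) u :=
  intervalIntegral.integral_hasDerivAt_right ((hg.mono (hSc.uIcc_subset ha hu)).intervalIntegrable)
    (hg.stronglyMeasurableAtFilter hSo u hu) (hg.continuousAt (hSo.mem_nhds hu))

theorem lt_of_hasDerivAt_of_strictMonoOn {f f' : ℝ → ℝ} {S : Set ℝ} (hS : S.OrdConnected)
    (hf : ∀ x ∈ S, HasDerivAt f (f' x) x) (hf' : StrictMonoOn f' S) {x₀ u : ℝ} (hx₀ : x₀ ∈ S)
    (hu : u ∈ S) (hcrit : f' x₀ = 0) (hne : u ≠ x₀) : f x₀ < f u := by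
  have mvt : ∀ {p q : ℝ}, p ∈ S → q ∈ S → p < q → ∃ c ∈ Ioo p q, f' c * (q - p) = f q - f p := by
    intro p q hp hq hpq
    have hsub : Icc p q ⊆ S := hS.out hp hq
    obtain ⟨c, hc, hslope⟩ := exists_hasDerivAt_eq_slope f f' hpq
      (fun x hx => (hf x (hsub hx)).continuousAt.continuousWithinAt)
      (fun x hx => hf x (hsub (Ioo_subset_Icc_self hx)))
    exact ⟨c, hc, by rw [hslope, div_mul_cancel₀ _ (sub_pos.2 hpq).ne']⟩
  rcases hne.lt_or_gt with hlt | hgt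
  · obtain ⟨c, hc, hmvt⟩ := mvt hu hx₀ hlt
    have hc_neg : f' c < 0 := hcrit ▸ hf' (hS.out hu hx₀ (Ioo_subset_Icc_self hc)) hx₀ hc.2
    nlinarith
  · obtain ⟨c, hc, hmvt⟩ := mvt hx₀ hu hgt
    have hc_pos : 0 < f' c := hcrit ▸ hf' hx₀ (hS.out hx₀ hu (Ioo_subset_Icc_self hc)) hc.1
    nlinarith

/-- The scalar Hamiltonian contribution `h(u) = 2r ∫₀ᵘ λ·artanh(s/λ) ds + a·u`
attains its global minimum over `(−λ, λ)` at the unique point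
`u* = λ·tanh(−a/(2λr))`. -/
theorem hamiltonian_scalar_min (lam r a : ℝ) (hlam : 0 < lam) (hr : 0 < r) :
    lam * Real.tanh (-a / (2 * lam * r)) ∈ Set.Ioo (-lam) lam ∧
      (∀ u ∈ Set.Ioo (-lam) lam,
        (2 * r * ∫ s in (0 : ℝ)..(lam * Real.tanh (-a / (2 * lam * r))),
            lam * artanh (s / lam)) + a * (lam * Real.tanh (-a / (2 * lam * r))) ≤
          (2 * r * ∫ s in (0 : ℝ)..u, lam * artanh (s / lam)) + a * u) ∧
      ∀ u ∈ Set.Ioo (-lam) lam,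
        (2 * r * ∫ s in (0 : ℝ)..u, lam * artanh (s / lam)) + a * u =
            (2 * r * ∫ s in (0 : ℝ)..(lam * Real.tanh (-a / (2 * lam * r))),
              lam * artanh (s / lam)) + a * (lam * Real.tanh (-a / (2 * lam * r))) →
          u = lam * Real.tanh (-a / (2 * lam * r)) := by
  set ustar := lam * Real.tanh (-a / (2 * lam * r))
  set h : ℝ → ℝ := fun u => (2 * r * ∫ s in (0 : ℝ)..u, lam * artanh (s / lam)) + a * u
  set h' : ℝ → ℝ := fun u => 2 * r * (lam * artanh (u / lam)) + a
  have hustar : ustar ∈ Ioo (-lam) lam := mul_tanh_mem_Ioo hlam _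
  have hderiv : ∀ u ∈ Ioo (-lam) lam, HasDerivAt h (h' u) u := fun u hu =>
    ((hasDerivAt_intervalIntegral_of_continuousOn isOpen_Ioo ordConnected_Ioo
      (continuousOn_const.mul (continuousOn_artanh.comp (continuousOn_id.div_const lam)
        fun _ hs => div_mem_Ioo_neg_one_one hlam hs)) ⟨neg_lt_zero.2 hlam, hlam⟩ hu).const_mul
      (2 * r)).add ((hasDerivAt_id u).const_mul a) |>.congr_deriv (by simp [h'])
  have hmono : StrictMonoOn h' (Ioo (-lam) lam) := fun u hu v hv huv => by
    have hartanh := strictMonoOn_artanh (div_mem_Ioo_neg_one_one hlam hu) (div_mem_Ioo_neg_one_one hlam hv)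
      (div_lt_div_of_pos_right huv hlam)
    simp only [h']
    gcongr
  have hcrit : h' ustar = 0 := by
    simp only [h', ustar, mul_div_cancel_left₀ _ hlam.ne', artanh_tanh]
    field_simp
    ring
  have hmin : ∀ u ∈ Ioo (-lam) lam, u ≠ ustar → h ustar < h u := fun u hu =>
    lt_of_hasDerivAt_of_strictMonoOn ordConnected_Ioo hderiv hmono hustar hu hcrit
  refine ⟨hustar, fun u hu => ?_, fun u hu heq => ?_⟩
  · rcases eq_or_ne u ustar with rfl | hne
    · exact le_rfl
    · exact (hmin u hu hne).le
  · by_contra hne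
    exact (hmin u hu hne).ne' heq
end

section
/- Let n, m ∈ ℕ, and let f : ℝⁿ → ℝⁿ, g : ℝⁿ → ℝ^{n×m}, u : ℝⁿ → ℝ^m be continuous, e : ℝ → ℝ^m be continuous, Q : ℝⁿ → ℝ and U : ℝ^m → ℝ be continuous, and let V : ℝⁿ → ℝ be continuously differentiable. Assume that for every y ∈ ℝⁿ: Q(y) + U(u(y)) + ⟨∇V(y), f(y) + g(y)u(y)⟩ = 0. Let x : ℝ → ℝⁿ be differentiable, satisfying ẋ(τ) = f(x(τ)) + g(x(τ))(u(x(τ)) + e(τ)) for all τ ∈ ℝ. Then for every t ∈ ℝ and T > 0: V(x(t)) − V(x(t−T)) − ∫_{t−T}^{t} ⟨∇V(x(τ)), g(x(τ)) e(τ)⟩ dτ = − ∫_{t−T}^{t} (Q(x(τ)) + U(u(x(τ)))) dτ. -/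
open Matrix

/-!
Along any trajectory, the chain rule gives `d/dτ V(x τ) = ⟨∇V(x τ), ẋ τ⟩`. Splitting
`ẋ = (f + g u) + g e` and using the HJB equation for the first part, this derivative equals
`-(Q + U ∘ u)(x τ) + ⟨∇V(x τ), g(x τ) e(τ)⟩`, a continuous function of `τ`; the fundamental
theorem of calculus on `[t - T, t]` is then the claimed identity.
-/

open scoped InnerProductSpace Gradient

section GradientAlongCurve

variable {E : Type*} [NormedAddCommGroup E] [InnerProductSpace ℝ E] [CompleteSpace E]
  {V : E → ℝ}

theorem ContDiff.continuous_gradient (hV : ContDiff ℝ 1 V) : Continuous (∇ V) :=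
  (InnerProductSpace.toDual ℝ E).symm.continuous.comp (hV.continuous_fderiv one_ne_zero)

theorem HasGradientAt.hasDerivAt_comp {x : ℝ → E} {v x' : E} {τ : ℝ}
    (hV : HasGradientAt V v (x τ)) (hx : HasDerivAt x x' τ) :
    HasDerivAt (fun s => V (x s)) ⟪v, x'⟫_ℝ τ :=
  hV.hasFDerivAt.comp_hasDerivAt τ hx

theorem integral_inner_gradient_comp_eq_sub (hV : Differentiable ℝ V) {x x' : ℝ → E}
    {a b : ℝ} (hx : ∀ τ ∈ Set.uIcc a b, HasDerivAt x (x' τ) τ)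
    (hint : IntervalIntegrable (fun τ => ⟪∇ V (x τ), x' τ⟫_ℝ) MeasureTheory.volume a b) :
    ∫ τ in a..b, ⟪∇ V (x τ), x' τ⟫_ℝ = V (x b) - V (x a) :=
  intervalIntegral.integral_eq_sub_of_hasDerivAt
    (fun τ hτ => (hV (x τ)).hasGradientAt.hasDerivAt_comp (hx τ hτ)) hint

end GradientAlongCurve

theorem integral_temporal_difference_general (n m : ℕ)
    (f : EuclideanSpace ℝ (Fin n) → EuclideanSpace ℝ (Fin n))
    (g : EuclideanSpace ℝ (Fin n) → Matrix (Fin n) (Fin m) ℝ)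
    (u : EuclideanSpace ℝ (Fin n) → (Fin m → ℝ))
    (e : ℝ → (Fin m → ℝ))
    (Q : EuclideanSpace ℝ (Fin n) → ℝ) (U : (Fin m → ℝ) → ℝ)
    (V : EuclideanSpace ℝ (Fin n) → ℝ)
    (hg : Continuous g) (hu : Continuous u) (he : Continuous e)
    (hQ : Continuous Q) (hU : Continuous U) (hV : ContDiff ℝ 1 V)
    (hHJB : ∀ y : EuclideanSpace ℝ (Fin n),
      Q y + U (u y)
        + (inner ℝ (gradient V y)
            (f y + (WithLp.equiv 2 (Fin n → ℝ)).symm (g y *ᵥ u y)) : ℝ) = 0)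
    (x : ℝ → EuclideanSpace ℝ (Fin n))
    (hx : ∀ τ : ℝ, HasDerivAt x
      (f (x τ) + (WithLp.equiv 2 (Fin n → ℝ)).symm (g (x τ) *ᵥ (u (x τ) + e τ))) τ)
    (t T : ℝ) :
    V (x t) - V (x (t - T))
        - ∫ τ in (t - T)..t,
            (inner ℝ (gradient V (x τ))
              ((WithLp.equiv 2 (Fin n → ℝ)).symm (g (x τ) *ᵥ e τ)) : ℝ) =
      - ∫ τ in (t - T)..t, (Q (x τ) + U (u (x τ))) := by
  set cost := fun τ => Q (x τ) + U (u (x τ))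
  set exploration := fun τ =>
    ⟪∇ V (x τ), (WithLp.equiv 2 (Fin n → ℝ)).symm (g (x τ) *ᵥ e τ)⟫_ℝ
  have hxc : Continuous x := continuous_iff_continuousAt.mpr fun τ => (hx τ).continuousAt
  have hcost : Continuous cost := (hQ.comp hxc).add (hU.comp (hu.comp hxc))
  have hexploration : Continuous exploration :=
    (hV.continuous_gradient.comp hxc).inner
      ((PiLp.continuous_toLp 2 _).comp ((hg.comp hxc).matrix_mulVec he))
  have hrate : ∀ τ, ⟪∇ V (x τ),
      f (x τ) + (WithLp.equiv 2 (Fin n → ℝ)).symm (g (x τ) *ᵥ (u (x τ) + e τ))⟫_ℝ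
        = -cost τ + exploration τ := by
    intro τ
    have := hHJB (x τ)
    simp only [cost, exploration, mulVec_add, WithLp.equiv_symm_apply, WithLp.toLp_add] at this ⊢
    rw [← add_assoc, inner_add_right]
    linarith
  have hftc : ∫ τ in (t - T)..t, (-cost τ + exploration τ) = V (x t) - V (x (t - T)) := by
    simp only [← hrate]
    exact integral_inner_gradient_comp_eq_sub (hV.differentiable one_ne_zero) (fun τ _ => hx τ)
      (by simp only [hrate]; exact (hcost.neg.add hexploration).intervalIntegrable _ _)
  rw [intervalIntegral.integral_add (f := fun τ => -cost τ) (hcost.neg.intervalIntegrable _ _)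
    (hexploration.intervalIntegrable _ _), intervalIntegral.integral_neg] at hftc
  linarith

/-- Integral temporal-difference (exploration-HJB) equation: if `V` solves the HJB
equation `0 = Q(y) + U(u(y)) + ⟨∇V(y), f(y) + g(y)u(y)⟩` for all `y`, and `x` solves
`ẋ = f(x) + g(x)(u(x) + e)`, then for all `t` and `T > 0`,
`V(x(t)) − V(x(t−T)) − ∫_{t−T}^t ⟨∇V(x(τ)), g(x(τ))e(τ)⟩ dτ
  = − ∫_{t−T}^t (Q(x(τ)) + U(u(x(τ)))) dτ`. -/
theorem integral_temporal_difference (n m : ℕ)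
    (f : EuclideanSpace ℝ (Fin n) → EuclideanSpace ℝ (Fin n))
    (g : EuclideanSpace ℝ (Fin n) → Matrix (Fin n) (Fin m) ℝ)
    (u : EuclideanSpace ℝ (Fin n) → (Fin m → ℝ))
    (e : ℝ → (Fin m → ℝ))
    (Q : EuclideanSpace ℝ (Fin n) → ℝ) (U : (Fin m → ℝ) → ℝ)
    (V : EuclideanSpace ℝ (Fin n) → ℝ)
    (hf : Continuous f) (hg : Continuous g) (hu : Continuous u) (he : Continuous e)
    (hQ : Continuous Q) (hU : Continuous U) (hV : ContDiff ℝ 1 V)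
    (hHJB : ∀ y : EuclideanSpace ℝ (Fin n),
      Q y + U (u y)
        + (inner ℝ (gradient V y)
            (f y + (WithLp.equiv 2 (Fin n → ℝ)).symm (g y *ᵥ u y)) : ℝ) = 0)
    (x : ℝ → EuclideanSpace ℝ (Fin n))
    (hx : ∀ τ : ℝ, HasDerivAt x
      (f (x τ) + (WithLp.equiv 2 (Fin n → ℝ)).symm (g (x τ) *ᵥ (u (x τ) + e τ))) τ)
    (t T : ℝ) (hT : 0 < T) :
    V (x t) - V (x (t - T))
        - ∫ τ in (t - T)..t,
            (inner ℝ (gradient V (x τ))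
              ((WithLp.equiv 2 (Fin n → ℝ)).symm (g (x τ) *ᵥ e τ)) : ℝ) =
      - ∫ τ in (t - T)..t, (Q (x τ) + U (u (x τ))) :=
  integral_temporal_difference_general n m f g u e Q U V hg hu he hQ hU hV hHJB x hx t T
end
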